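/- arXiv:2012.11215 — 2 statements merged into one kernel-verified Lean document; each statement's English description precedes it below -/
import Mathlib

section
/- Under assumptions (A1)–(A4) and the testing logic, the prevalence in the testing pool is point-identified as P(x=1|t=1) = γ/σ, the overall prevalence satisfies p = P(x=1) ∈ [τγ/σ, γ/σ], and the overall positivity rate of the established test satisfies P(y=1) ∈ [τγ, γ]; moreover these bounds are sharp, i.e. each endpoint is attained by some distribution consistent with the data. -/
/-!
Population model: a pmf `P` on `{0,1}^4` over `(x, y, z, t)` where `x = true` means truly
infected, `y` is the established test result, `z` the new test result, and `t = true` means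
the person belongs to the testing pool.  The testing logic requires `z = 1 → t = 1`.
-/

namespace PaperTest

abbrev Dist := Bool → Bool → Bool → Bool → ℝ

/-- Probability of the event `A` under `P`. -/
noncomputable def pr (P : Dist) (A : Bool → Bool → Bool → Bool → Bool) : ℝ :=
  ∑ x : Bool, ∑ y : Bool, ∑ z : Bool, ∑ t : Bool, if A x y z t then P x y z t else 0

/-- Conditional probability `P(A | B)`. -/
noncomputable def cpr (P : Dist) (A B : Bool → Bool → Bool → Bool → Bool) : ℝ :=
  pr P (fun x y z t => A x y z t && B x y z t) / pr P B

def IsPMF (P : Dist) : Prop :=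
  (∀ x y z t, 0 ≤ P x y z t) ∧
    (∑ x : Bool, ∑ y : Bool, ∑ z : Bool, ∑ t : Bool, P x y z t) = 1

/-- Testing logic: `z = 1` implies `t = 1`, i.e. there is no mass on `z = 1 ∧ t = 0`. -/
def TestLogic (P : Dist) : Prop := ∀ x y, P x y true false = 0

/-- Prevalence `p = P(x=1)`. -/
noncomputable def prev (P : Dist) : ℝ := pr P fun x _ _ _ => x

/-- Sensitivity of the established test, `σ = P(y=1 | x=1)`. -/
noncomputable def sens (P : Dist) : ℝ := cpr P (fun _ y _ _ => y) (fun x _ _ _ => x)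

/-- `τ = P(t=1)`. -/
noncomputable def tau (P : Dist) : ℝ := pr P fun _ _ _ t => t

/-- `γ = P(y=1 | t=1)`. -/
noncomputable def gamma (P : Dist) : ℝ := cpr P (fun _ y _ _ => y) (fun _ _ _ t => t)

/-- `ζ = P(z=1 | t=1)`. -/
noncomputable def zeta (P : Dist) : ℝ := cpr P (fun _ _ z _ => z) (fun _ _ _ t => t)

/-- `χ̄ = γ/σ`, the prevalence in the testing pool. -/
noncomputable def chibar (P : Dist) : ℝ := gamma P / sens P

/-- (A1) non-trivial prevalence. -/
def A1 (P : Dist) : Prop := 0 < prev P ∧ prev P < 1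

/-- (A2) no false positives for the established test: `P(x=0, y=1) = 0`. -/
def A2 (P : Dist) : Prop := pr P (fun x y _ _ => !x && y) = 0

/-- (A3) test monotonicity: `P(x=1 | t=1) ≥ P(x=1 | t=0)`. -/
def A3 (P : Dist) : Prop :=
  cpr P (fun x _ _ _ => x) (fun _ _ _ t => t) ≥ cpr P (fun x _ _ _ => x) (fun _ _ _ t => !t)

/-- (A4) health sufficiency: `P(y=1 | x=1, t=1) = P(y=1 | x=1) = σ`. -/
def A4 (P : Dist) : Prop := cpr P (fun _ y _ _ => y) (fun x _ _ t => x && t) = sens P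

/-- `P(y=1, z=1 | t=1)`. -/
noncomputable def q11 (P : Dist) : ℝ := cpr P (fun _ y z _ => y && z) (fun _ _ _ t => t)

/-- `P(y=1, z=0 | t=1)`. -/
noncomputable def q10 (P : Dist) : ℝ := cpr P (fun _ y z _ => y && !z) (fun _ _ _ t => t)

/-- `P(y=0, z=1 | t=1)`. -/
noncomputable def q01 (P : Dist) : ℝ := cpr P (fun _ y z _ => !y && z) (fun _ _ _ t => t)

/-- `P(y=0, z=0 | t=1)`. -/
noncomputable def q00 (P : Dist) : ℝ := cpr P (fun _ y z _ => !y && !z) (fun _ _ _ t => t)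

/-- `Q` induces the same conditional data distribution `P(y, z | t=1)` and the same
sensitivity `σ` of the established test as `P`. -/
def SameData (P Q : Dist) : Prop :=
  (∀ y0 z0 : Bool,
      cpr Q (fun _ y z _ => (y == y0) && (z == z0)) (fun _ _ _ t => t) =
        cpr P (fun _ y z _ => (y == y0) && (z == z0)) (fun _ _ _ t => t)) ∧
    sens Q = sens P

/-- Assumptions (A1)–(A4), the testing logic, and the maintained regularity conditions
`γ, ζ, τ > 0` and `γ < σ ≤ 1`. -/
def Setup (P : Dist) : Prop :=
  IsPMF P ∧ TestLogic P ∧ A1 P ∧ A2 P ∧ A3 P ∧ A4 P ∧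
    0 < gamma P ∧ 0 < zeta P ∧ 0 < tau P ∧ gamma P < sens P ∧ sens P ≤ 1

/-- `Q` is consistent with the data of `P`: it satisfies all assumptions and induces the
same `P(y, z | t=1)`, the same `σ`, and the same `τ`. -/
def Consistent (P Q : Dist) : Prop := Setup Q ∧ SameData P Q ∧ tau Q = tau P

section Aux

/-- `P(y = y0, z = z0, t = 1)`. -/
noncomputable def sP (P : Dist) (y0 z0 : Bool) : ℝ := P true y0 z0 true + P false y0 z0 true

lemma pr_s (P : Dist) (y0 z0 : Bool) :
    pr P (fun _ y z t => ((y == y0) && (z == z0)) && t) = sP P y0 z0 := by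
  cases y0 <;> cases z0 <;> (simp [pr, sP, Fintype.sum_bool]; try ring)

set_option maxHeartbeats 1000000 in
lemma main_bounds (P : Dist) (h : Setup P) :
    cpr P (fun x _ _ _ => x) (fun _ _ _ t => t) = gamma P / sens P ∧
    prev P ∈ Set.Icc (tau P * gamma P / sens P) (gamma P / sens P) ∧
    pr P (fun _ y _ _ => y) ∈ Set.Icc (tau P * gamma P) (gamma P) := by
  obtain ⟨⟨hnn, hsum⟩, hTL, ⟨hp0, hp1⟩, hA2, hA3, hA4, hγ, hζ, hτ, hγσ, hσ1⟩ := h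
  have hσ : 0 < sens P := lt_trans hγ hγσ
  -- A2 zero entries
  have key : P false true true true + P false true true false +
      P false true false true + P false true false false = 0 := by
    have h2 : pr P (fun x y _ _ => !x && y) = 0 := hA2
    simp [pr, Fintype.sum_bool] at h2; linarith
  have e1 : P false true true true = 0 :=
    le_antisymm (by linarith [hnn false true true false, hnn false true false true, hnn false true false false]) (hnn false true true true)
  have e2 : P false true true false = 0 :=
    le_antisymm (by linarith [hnn false true true true, hnn false true false true, hnn false true false false]) (hnn false true true false)
  have e3 : P false true false true = 0 :=
    le_antisymm (by linarith [hnn false true true true, hnn false true true false, hnn false true false false]) (hnn false true false true)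
  have e4 : P false true false false = 0 :=
    le_antisymm (by linarith [hnn false true true true, hnn false true true false, hnn false true false true]) (hnn false true false false)
  -- expansions
  have hτdef : tau P = P true true true true + P true true false true + P true false true true +
      P true false false true + P false true true true + P false true false true +
      P false false true true + P false false false true := by
    simp [tau, pr, Fintype.sum_bool]; try ring
  have hsum' : P true true true true + P true true true false + P true true false true +
      P true true false false + P true false true true + P true false true false +
      P true false false true + P true false false false + P false true true true +
      P false true true false + P false true false true + P false true false false +
      P false false true true + P false false true false + P false false false true +
      P false false false false = 1 := by
    simp [Fintype.sum_bool] at hsum; linarith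
  -- N = P(x=1, t=1), M = P(x=1, y=1, t=1), G = P(y=1, t=1)
  set N := pr P (fun x _ _ t => x && t) with hNdef
  have hN : N = P true true true true + P true true false true + P true false true true +
      P true false false true := by
    rw [hNdef]; simp [pr, Fintype.sum_bool]; try ring
  have hG : pr P (fun _ y _ t => y && t) = P true true true true + P true true false true := by
    simp [pr, Fintype.sum_bool]; linarith
  have hM : pr P (fun x y _ t => y && (x && t)) = P true true true true + P true true false true := by
    simp [pr, Fintype.sum_bool]; try ring
  -- γ τ = M
  have hγτ : gamma P * tau P = P true true true true + P true true false true := by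
    have : gamma P = (P true true true true + P true true false true) / tau P := by
      rw [gamma, cpr, hG, tau]
    rw [this]; field_simp
  have hA4' : pr P (fun x y z t => y && (x && t)) / N = sens P := hA4
  rw [hM] at hA4'
  -- N > 0
  have hNnn : 0 ≤ N := by
    rw [hN]
    have := hnn true true true true; have := hnn true true false true
    have := hnn true false true true; have := hnn true false false true
    linarith
  have hNpos : 0 < N := by
    rcases lt_or_eq_of_le hNnn with h' | h'
    · exact h'
    · exfalso
      have hM0 : P true true true true + P true true false true = 0 := by
        have := hnn true true true true; have := hnn true true false true
        have := hnn true false true true; have := hnn true false false true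
        rw [hN] at h'; linarith
      rw [hM0, ← h'] at hA4'
      simp at hA4'
      linarith [hA4' ▸ hσ]
  -- σ N = γ τ
  have hσN : sens P * N = gamma P * tau P := by
    rw [hγτ, ← hA4']; field_simp
  -- part 1
  have htp : pr P (fun _ _ _ t => t) = tau P := rfl
  have part1 : cpr P (fun x _ _ _ => x) (fun _ _ _ t => t) = gamma P / sens P := by
    rw [cpr]
    have hh : pr P (fun x y z t => x && t) = N := by rw [hNdef]
    rw [hh, htp]
    rw [div_eq_div_iff hτ.ne' hσ.ne']
    show N * sens P = gamma P * tau P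
    rw [← hσN]; ring
  -- N = τ γ / σ
  have hNval : N = tau P * gamma P / sens P := by
    field_simp; linarith [hσN]
  -- prevalence decomposition
  have hprev : prev P = N + pr P (fun x _ _ t => x && !t) := by
    rw [prev, hN]; simp [pr, Fintype.sum_bool]; try ring
  have hN0 : pr P (fun x _ _ t => x && !t) = P true true true false + P true true false false +
      P true false true false + P true false false false := by
    simp [pr, Fintype.sum_bool]; try ring
  have hU : pr P (fun _ _ _ t => !t) = P true true true false + P true true false false +
      P true false true false + P true false false false + P false true true false +
      P false true false false + P false false true false + P false false false false := by
    simp [pr, Fintype.sum_bool]; try ring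
  have hτU : tau P + pr P (fun _ _ _ t => !t) = 1 := by
    rw [hτdef, hU]; linarith
  have hN0nn : 0 ≤ pr P (fun x _ _ t => x && !t) := by
    rw [hN0]
    have := hnn true true true false; have := hnn true true false false
    have := hnn true false true false; have := hnn true false false false
    linarith
  have hUnn : 0 ≤ pr P (fun _ _ _ t => !t) := by
    rw [hU]
    have := hnn true true true false; have := hnn true true false false
    have := hnn true false true false; have := hnn true false false false
    have := hnn false true true false; have := hnn false true false false
    have := hnn false false true false; have := hnn false false false false
    linarith
  have hN0U : pr P (fun x _ _ t => x && !t) ≤ pr P (fun _ _ _ t => !t) := by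
    rw [hN0, hU]
    have := hnn false true true false; have := hnn false true false false
    have := hnn false false true false; have := hnn false false false false
    linarith
  -- A3 consequence: N0 ≤ (γ/σ) * U
  have hχ : N / tau P = gamma P / sens P := by
    have := part1; rw [cpr] at this
    have h' : pr P (fun x y z t => x && t) = N := by rw [hNdef]
    rw [h'] at this; exact this
  have hA3' : pr P (fun x _ _ t => x && !t) ≤ gamma P / sens P * pr P (fun _ _ _ t => !t) := by
    have h3 : cpr P (fun x _ _ _ => x) (fun _ _ _ t => !t) ≤ gamma P / sens P := by
      calc cpr P (fun x _ _ _ => x) (fun _ _ _ t => !t)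
          ≤ cpr P (fun x _ _ _ => x) (fun _ _ _ t => t) := hA3
        _ = gamma P / sens P := part1
    rw [cpr] at h3
    have h4 : pr P (fun x y z t => x && !t) = pr P (fun x _ _ t => x && !t) := rfl
    rw [h4] at h3
    rcases eq_or_lt_of_le hUnn with hU0 | hU0
    · have : pr P (fun x _ _ t => x && !t) = 0 := le_antisymm (by rw [← hU0] at hN0U; exact hN0U) hN0nn
      rw [this, ← hU0]; ring_nf; rfl
    · calc pr P (fun x _ _ t => x && !t)
          = pr P (fun x _ _ t => x && !t) / pr P (fun _ _ _ t => !t) * pr P (fun _ _ _ t => !t) := by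
            field_simp
        _ ≤ gamma P / sens P * pr P (fun _ _ _ t => !t) := by
            apply mul_le_mul_of_nonneg_right h3 (le_of_lt hU0)
  have hχpos : 0 < gamma P / sens P := div_pos hγ hσ
  have hlow : tau P * gamma P / sens P ≤ prev P := by
    rw [hprev, hNval]; linarith
  have hup : prev P ≤ gamma P / sens P := by
    rw [hprev, hNval]
    have hU' : pr P (fun _ _ _ t => !t) = 1 - tau P := by linarith
    have h7 : pr P (fun x _ _ t => x && !t) ≤ gamma P / sens P * (1 - tau P) := by
      rw [← hU']; exact hA3'
    have h8 : tau P * gamma P / sens P = gamma P / sens P * tau P := by ring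
    linarith
  -- P(y=1) = sens * prev
  have hY : pr P (fun _ y _ _ => y) = P true true true true + P true true true false +
      P true true false true + P true true false false := by
    simp [pr, Fintype.sum_bool, e1, e2, e3, e4]; try ring
  have hYX : pr P (fun x y z t => y && x) = P true true true true + P true true true false +
      P true true false true + P true true false false := by
    simp [pr, Fintype.sum_bool]; try ring
  have hpp : pr P (fun x _ _ _ => x) = prev P := rfl
  have hsens : pr P (fun _ y _ _ => y) = sens P * prev P := by
    have hs : sens P = (P true true true true + P true true true false +
        P true true false true + P true true false false) / prev P := by
      rw [sens, cpr, hYX, hpp]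
    rw [hY, hs]; field_simp
  have hid1 : sens P * (tau P * gamma P / sens P) = tau P * gamma P := by field_simp
  have hid2 : sens P * (gamma P / sens P) = gamma P := by field_simp
  refine ⟨part1, ⟨hlow, hup⟩, ⟨?_, ?_⟩⟩
  · rw [hsens]
    linarith [mul_le_mul_of_nonneg_left hlow hσ.le, hid1]
  · rw [hsens]
    linarith [mul_le_mul_of_nonneg_left hup hσ.le, hid2]

/-- Explicit distribution matching the data of `P`, with prevalence `β` conditional on
`t = 0`. -/
noncomputable def mkQ (P : Dist) (β : ℝ) : Dist := fun x y z t =>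
  if t then
    sP P y z *
      (if y then (if x then 1 else 0)
       else (if x then (gamma P / sens P - gamma P) / (1 - gamma P)
             else 1 - (gamma P / sens P - gamma P) / (1 - gamma P)))
  else
    if z then 0
    else (1 - tau P) * (if y then (if x then β * sens P else 0)
                        else (if x then β * (1 - sens P) else 1 - β))

set_option maxHeartbeats 1000000 in
lemma construct (P : Dist) (h : Setup P) (β : ℝ) (hβ0 : 0 ≤ β)
    (hβχ : β ≤ gamma P / sens P) :
    Consistent P (mkQ P β) ∧
      prev (mkQ P β) = tau P * (gamma P / sens P) + (1 - tau P) * β ∧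
      pr (mkQ P β) (fun _ y _ _ => y) = tau P * gamma P + (1 - tau P) * β * sens P := by
  obtain ⟨⟨hnn, hsum⟩, hTL, ⟨hp0, hp1⟩, hA2, hA3, hA4, hγ, hζ, hτ, hγσ, hσ1⟩ := h
  have hσ : 0 < sens P := lt_trans hγ hγσ
  have hγ1 : gamma P < 1 := lt_of_lt_of_le hγσ hσ1
  have hχ1 : gamma P / sens P < 1 := (div_lt_one hσ).2 hγσ
  have hχ0 : 0 < gamma P / sens P := div_pos hγ hσ
  have hγχ : gamma P ≤ gamma P / sens P := by
    rw [le_div_iff₀ hσ]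
    have : gamma P * sens P ≤ gamma P * 1 := mul_le_mul_of_nonneg_left hσ1 hγ.le
    linarith
  set α := (gamma P / sens P - gamma P) / (1 - gamma P) with hαdef
  have hα : α * (1 - gamma P) = gamma P / sens P - gamma P := by
    rw [hαdef]; exact div_mul_cancel₀ _ (by linarith)
  have hα0 : 0 ≤ α := div_nonneg (by linarith) (by linarith)
  have hα1 : α ≤ 1 := by
    rw [hαdef, div_le_one (by linarith)]; linarith
  have hβ1 : β ≤ 1 := le_trans hβχ (le_of_lt hχ1)
  have snn : ∀ y z, 0 ≤ sP P y z := fun y z => add_nonneg (hnn true y z true) (hnn false y z true)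
  -- key sums about sP
  have hsτ : sP P true true + sP P true false + sP P false true + sP P false false = tau P := by
    simp [sP, tau, pr, Fintype.sum_bool]; try ring
  have hyt : pr P (fun _ y _ t => y && t) = sP P true true + sP P true false := by
    simp [sP, pr, Fintype.sum_bool]; try ring
  have hzt : pr P (fun _ _ z t => z && t) = sP P true true + sP P false true := by
    simp [sP, pr, Fintype.sum_bool]; try ring
  have htp : pr P (fun _ _ _ t => t) = tau P := rfl
  have hsγ : sP P true true + sP P true false = gamma P * tau P := by
    have hg : gamma P = (sP P true true + sP P true false) / tau P := by
      rw [gamma, cpr, hyt, htp]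
    rw [hg]; field_simp
  have hsζ : sP P true true + sP P false true = zeta P * tau P := by
    have hg : zeta P = (sP P true true + sP P false true) / tau P := by
      rw [zeta, cpr, hzt, htp]
    rw [hg]; field_simp
  have hτ1 : tau P ≤ 1 := by
    have hsum' : P true true true true + P true true true false + P true true false true +
        P true true false false + P true false true true + P true false true false +
        P true false false true + P true false false false + P false true true true +
        P false true true false + P false true false true + P false true false false +
        P false false true true + P false false true false + P false false false true +
        P false false false false = 1 := by
      simp [Fintype.sum_bool] at hsum; linarith
    have hτdef : tau P = P true true true true + P true true false true + P true false true true +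
        P true false false true + P false true true true + P false true false true +
        P false false true true + P false false false true := by
      simp [tau, pr, Fintype.sum_bool]; try ring
    have n1 := hnn true true true false; have n2 := hnn true true false false
    have n3 := hnn true false true false; have n4 := hnn true false false false
    have n5 := hnn false true true false; have n6 := hnn false true false false
    have n7 := hnn false false true false; have n8 := hnn false false false false
    linarith
  set Q := mkQ P β with hQdef
  -- value computations for Q
  have hQτ : pr Q (fun _ _ _ t => t) = tau P := by
    rw [hQdef]; simp [pr, mkQ, Fintype.sum_bool]
    linear_combination hsτ
  have hQsum : (∑ x : Bool, ∑ y : Bool, ∑ z : Bool, ∑ t : Bool, Q x y z t) = 1 := by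
    rw [hQdef]; simp [mkQ, Fintype.sum_bool]
    linear_combination hsτ
  have hQnn : ∀ x y z t, 0 ≤ Q x y z t := by
    intro x y z t
    rw [hQdef]
    cases x <;> cases y <;> cases z <;> cases t <;> simp [mkQ] <;>
      first
        | positivity
        | exact mul_nonneg (snn _ _) hα0
        | exact mul_nonneg (snn _ _) (by linarith)
        | exact mul_nonneg (by linarith) (mul_nonneg hβ0 hσ.le)
        | exact mul_nonneg (by linarith) (mul_nonneg hβ0 (by linarith))
        | exact mul_nonneg (by linarith) (by linarith)
        | exact snn _ _
  have hQprev : prev Q = tau P * (gamma P / sens P) + (1 - tau P) * β := by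
    rw [hQdef, prev]; simp [pr, mkQ, Fintype.sum_bool]
    linear_combination (1 - α) * hsγ + α * hsτ + tau P * hα
  have hQy : pr Q (fun _ y _ _ => y) = tau P * gamma P + (1 - tau P) * β * sens P := by
    rw [hQdef]; simp [pr, mkQ, Fintype.sum_bool]
    linear_combination hsγ
  have hQyx : pr Q (fun x y z t => y && x) = tau P * gamma P + (1 - tau P) * β * sens P := by
    rw [hQdef]; simp [pr, mkQ, Fintype.sum_bool]
    linear_combination hsγ
  have hQxt : pr Q (fun x y z t => x && t) = tau P * (gamma P / sens P) := by
    rw [hQdef]; simp [pr, mkQ, Fintype.sum_bool]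
    linear_combination (1 - α) * hsγ + α * hsτ + tau P * hα
  have hQyxt : pr Q (fun x y z t => y && (x && t)) = tau P * gamma P := by
    rw [hQdef]; simp [pr, mkQ, Fintype.sum_bool]
    linear_combination hsγ
  have hQxnt : pr Q (fun x y z t => x && !t) = (1 - tau P) * β := by
    rw [hQdef]; simp [pr, mkQ, Fintype.sum_bool]; ring
  have hQnt : pr Q (fun _ _ _ t => !t) = 1 - tau P := by
    rw [hQdef]; simp [pr, mkQ, Fintype.sum_bool]; ring
  have hQA2 : pr Q (fun x y _ _ => !x && y) = 0 := by
    rw [hQdef]; simp [pr, mkQ, Fintype.sum_bool]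
  have hQyt : pr Q (fun x y z t => y && t) = tau P * gamma P := by
    rw [hQdef]; simp [pr, mkQ, Fintype.sum_bool]
    linear_combination hsγ
  have hQzt : pr Q (fun x y z t => z && t) = tau P * zeta P := by
    rw [hQdef]; simp [pr, mkQ, Fintype.sum_bool]
    linear_combination hsζ
  have hQs : ∀ y0 z0, pr Q (fun x y z t => ((y == y0) && (z == z0)) && t) = sP P y0 z0 := by
    intro y0 z0
    rw [hQdef]
    cases y0 <;> cases z0 <;> (simp [pr, mkQ, Fintype.sum_bool]; try ring)
  -- derived quantities
  have hprevpos : 0 < prev Q := by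
    rw [hQprev]
    have h1 : 0 < tau P * (gamma P / sens P) := mul_pos hτ hχ0
    have h2 : 0 ≤ (1 - tau P) * β := mul_nonneg (by linarith) hβ0
    linarith
  have hQsens : sens Q = sens P := by
    rw [sens, cpr]
    have h1 : pr Q (fun x y z t => y && x) = tau P * gamma P + (1 - tau P) * β * sens P := hQyx
    have h2 : pr Q (fun x _ _ _ => x) = prev Q := rfl
    rw [h1, h2, hQprev, div_eq_iff (by rw [hQprev] at hprevpos; linarith)]
    field_simp
  have hQgamma : gamma Q = gamma P := by
    rw [gamma, cpr]
    have h1 : pr Q (fun x y z t => y && t) = tau P * gamma P := hQyt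
    rw [h1, hQτ, mul_comm, mul_div_assoc, div_self hτ.ne', mul_one]
  have hQzeta : zeta Q = zeta P := by
    rw [zeta, cpr]
    have h1 : pr Q (fun x y z t => z && t) = tau P * zeta P := hQzt
    rw [h1, hQτ, mul_comm, mul_div_assoc, div_self hτ.ne', mul_one]
  have hQtau : tau Q = tau P := hQτ
  have hQcxt : cpr Q (fun x _ _ _ => x) (fun _ _ _ t => t) = gamma P / sens P := by
    rw [cpr]
    have h1 : pr Q (fun x y z t => x && t) = tau P * (gamma P / sens P) := hQxt
    rw [h1, hQτ, mul_comm, mul_div_assoc, div_self hτ.ne', mul_one]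
  have hsetup : Setup Q := by
    refine ⟨⟨hQnn, hQsum⟩, ?_, ⟨hprevpos, ?_⟩, hQA2, ?_, ?_, ?_, ?_, ?_, ?_, ?_⟩
    · -- TestLogic
      intro x y
      rw [hQdef]; simp [mkQ]
    · -- prev < 1
      rw [hQprev]
      have h1 : (1 - tau P) * β ≤ (1 - tau P) * (gamma P / sens P) :=
        mul_le_mul_of_nonneg_left hβχ (by linarith)
      have h2 : tau P * (gamma P / sens P) + (1 - tau P) * (gamma P / sens P) =
          gamma P / sens P := by ring
      linarith
    · -- A3
      show cpr Q (fun x _ _ _ => x) (fun _ _ _ t => t) ≥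
        cpr Q (fun x _ _ _ => x) (fun _ _ _ t => !t)
      rw [hQcxt, cpr]
      have h1 : pr Q (fun x y z t => x && !t) = (1 - tau P) * β := hQxnt
      rw [h1, hQnt]
      rcases eq_or_lt_of_le hτ1 with h' | h'
      · rw [← h']; simp; positivity
      · rw [mul_comm, mul_div_assoc, div_self (by linarith), mul_one]
        exact hβχ
    · -- A4
      show cpr Q (fun _ y _ _ => y) (fun x _ _ t => x && t) = sens Q
      rw [hQsens, cpr]
      have h1 : pr Q (fun x y z t => y && (x && t)) = tau P * gamma P := hQyxt
      rw [h1, hQxt, div_eq_iff (by positivity)]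
      field_simp
    · rw [hQgamma]; exact hγ
    · rw [hQzeta]; exact hζ
    · rw [hQtau]; exact hτ
    · rw [hQgamma, hQsens]; exact hγσ
    · rw [hQsens]; exact hσ1
  refine ⟨⟨hsetup, ⟨?_, hQsens⟩, hQtau⟩, hQprev, hQy⟩
  intro y0 z0
  rw [cpr, cpr]
  have h1 : pr Q (fun x y z t => ((y == y0) && (z == z0)) && t) = sP P y0 z0 := hQs y0 z0
  have h2 : pr P (fun x y z t => ((y == y0) && (z == z0)) && t) = sP P y0 z0 := pr_s P y0 z0
  rw [h1, h2, hQτ, htp]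

end Aux

/-- the prevalence in the testing pool is point-identified as
`P(x=1 | t=1) = γ/σ`, the overall prevalence satisfies `p ∈ [τγ/σ, γ/σ]`, the overall
positivity rate of the established test satisfies `P(y=1) ∈ [τγ, γ]`, and these bounds
are sharp: each endpoint is attained by some distribution consistent with the data. -/
theorem statement0 (P : Dist) (h : Setup P) :
    cpr P (fun x _ _ _ => x) (fun _ _ _ t => t) = gamma P / sens P ∧
    prev P ∈ Set.Icc (tau P * gamma P / sens P) (gamma P / sens P) ∧
    pr P (fun _ y _ _ => y) ∈ Set.Icc (tau P * gamma P) (gamma P) ∧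
    (∃ Q : Dist, Consistent P Q ∧ prev Q = tau P * gamma P / sens P ∧
      pr Q (fun _ y _ _ => y) = tau P * gamma P) ∧
    (∃ Q : Dist, Consistent P Q ∧ prev Q = gamma P / sens P ∧
      pr Q (fun _ y _ _ => y) = gamma P) := by
  obtain ⟨h1, h2, h3⟩ := main_bounds P h
  obtain ⟨_, _, _, _, _, _, hγ, _, hτ, hγσ, hσ1⟩ := id h
  have hσ : 0 < sens P := lt_trans hγ hγσ
  have hχ0 : 0 < gamma P / sens P := div_pos hγ hσ
  refine ⟨h1, h2, h3, ?_, ?_⟩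
  · -- lower endpoint: β = 0
    obtain ⟨hc, hprev, hy⟩ := construct P h 0 le_rfl (le_of_lt hχ0)
    exact ⟨mkQ P 0, hc, by rw [hprev]; ring, by rw [hy]; ring⟩
  · -- upper endpoint: β = γ/σ
    obtain ⟨hc, hprev, hy⟩ := construct P h (gamma P / sens P) (le_of_lt hχ0) le_rfl
    refine ⟨mkQ P (gamma P / sens P), hc, ?_, ?_⟩
    · rw [hprev]; field_simp; ring
    · rw [hy]; field_simp; ring

end PaperTest
end

section
/- (Fréchet bounds with an overlapping binary margin) Let ν be a probability mass function on {0,1} and let μ₁ and μ₂ be probability mass functions on {0,1}×{0,1} (interpreted as the (x,y)- and (y,z)-distributions) whose y-margins both equal ν. Then: (i) for every probability mass function Q on {0,1}³ whose (x,y)-margin is μ₁ and whose (y,z)-margin is μ₂, and for all a,b,c ∈ {0,1}, max{0, μ₁(a,b) + μ₂(b,c) − ν(b)} ≤ Q(a,b,c) ≤ min{μ₁(a,b), μ₂(b,c)}; and (ii) these bounds are sharp: for each cell (a,b,c), both the lower and the upper bound are attained by some probability mass function on {0,1}³ with margins μ₁ and μ₂. -/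
/-!
STATEMENT 3 (Fréchet bounds with an overlapping binary margin).
-/

namespace Frechet

def IsPMF1 (ν : Bool → ℝ) : Prop := (∀ b, 0 ≤ ν b) ∧ (∑ b : Bool, ν b) = 1

def IsPMF2 (μ : Bool → Bool → ℝ) : Prop :=
  (∀ a b, 0 ≤ μ a b) ∧ (∑ a : Bool, ∑ b : Bool, μ a b) = 1

def IsPMF3 (Q : Bool → Bool → Bool → ℝ) : Prop :=
  (∀ a b c, 0 ≤ Q a b c) ∧ (∑ a : Bool, ∑ b : Bool, ∑ c : Bool, Q a b c) = 1

/-- `Q` has `(x,y)`-margin `μ₁` and `(y,z)`-margin `μ₂`. -/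
def HasMargins (Q : Bool → Bool → Bool → ℝ) (μ₁ μ₂ : Bool → Bool → ℝ) : Prop :=
  (∀ a b, (∑ c : Bool, Q a b c) = μ₁ a b) ∧ (∀ b c, (∑ a : Bool, Q a b c) = μ₂ b c)

lemma construct (ν : Bool → ℝ) (μ₁ μ₂ : Bool → Bool → ℝ)
    (hν : IsPMF1 ν)
    (hm1 : ∀ b, (∑ a : Bool, μ₁ a b) = ν b)
    (hm2 : ∀ b, (∑ c : Bool, μ₂ b c) = ν b)
    (a c : Bool) (t : Bool → ℝ)
    (htl : ∀ b, 0 ≤ t b ∧ μ₁ a b + μ₂ b c - ν b ≤ t b)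
    (htu : ∀ b, t b ≤ μ₁ a b ∧ t b ≤ μ₂ b c) :
    ∃ Q : Bool → Bool → Bool → ℝ, IsPMF3 Q ∧ HasMargins Q μ₁ μ₂ ∧ ∀ b, Q a b c = t b := by
  refine ⟨fun a' b c' =>
    if a' = a then (if c' = c then t b else μ₁ a b - t b)
    else (if c' = c then μ₂ b c - t b else ν b - μ₁ a b - μ₂ b c + t b), ?_, ?_, ?_⟩
  · constructor
    · intro a' b c'
      obtain ⟨ht0, htL⟩ := htl b
      obtain ⟨htm1, htm2⟩ := htu b
      by_cases h : a' = a <;> by_cases h' : c' = c <;> simp [h, h'] <;> linarith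
    · have e1 := hm1 false; have e1' := hm1 true
      have e2 := hm2 false; have e2' := hm2 true
      have eν := hν.2
      simp [Fintype.sum_bool] at e1 e1' e2 e2' eν ⊢
      rcases a <;> rcases c <;> simp <;> linarith
  · constructor
    · intro a' b
      have e1 := hm1 b
      simp [Fintype.sum_bool] at e1 ⊢
      rcases a' <;> rcases a <;> rcases c <;> simp <;> linarith
    · intro b c'
      have e2 := hm2 b
      simp [Fintype.sum_bool] at e2 ⊢
      rcases c' <;> rcases a <;> rcases c <;> simp <;> linarith
  · intro b; simp

/-- Let `ν` be a pmf on `{0,1}` and let `μ₁`, `μ₂` be pmfs on `{0,1}²` (the `(x,y)`- and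
`(y,z)`-distributions) whose `y`-margins both equal `ν`.  Then (i) every pmf `Q` on
`{0,1}³` with `(x,y)`-margin `μ₁` and `(y,z)`-margin `μ₂` satisfies, for all `a, b, c`,
`max {0, μ₁(a,b) + μ₂(b,c) − ν(b)} ≤ Q(a,b,c) ≤ min {μ₁(a,b), μ₂(b,c)}`; and (ii) these
bounds are sharp: for each cell `(a,b,c)` both the lower and the upper bound are attained
by some pmf on `{0,1}³` with margins `μ₁` and `μ₂`. -/
theorem statement3 (ν : Bool → ℝ) (μ₁ μ₂ : Bool → Bool → ℝ)
    (hν : IsPMF1 ν) (h1 : IsPMF2 μ₁) (h2 : IsPMF2 μ₂)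
    (hm1 : ∀ b, (∑ a : Bool, μ₁ a b) = ν b)
    (hm2 : ∀ b, (∑ c : Bool, μ₂ b c) = ν b) :
    (∀ Q : Bool → Bool → Bool → ℝ, IsPMF3 Q → HasMargins Q μ₁ μ₂ →
      ∀ a b c : Bool,
        max 0 (μ₁ a b + μ₂ b c - ν b) ≤ Q a b c ∧ Q a b c ≤ min (μ₁ a b) (μ₂ b c)) ∧
    (∀ a b c : Bool,
      (∃ Q : Bool → Bool → Bool → ℝ, IsPMF3 Q ∧ HasMargins Q μ₁ μ₂ ∧
        Q a b c = max 0 (μ₁ a b + μ₂ b c - ν b)) ∧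
      (∃ Q : Bool → Bool → Bool → ℝ, IsPMF3 Q ∧ HasMargins Q μ₁ μ₂ ∧
        Q a b c = min (μ₁ a b) (μ₂ b c))) := by
  have key1 : ∀ a b, μ₁ a b ≤ ν b := by
    intro a b
    have e := hm1 b
    have p0 := h1.1 false b; have p1 := h1.1 true b
    simp [Fintype.sum_bool] at e
    rcases a <;> linarith
  have key2 : ∀ b c, μ₂ b c ≤ ν b := by
    intro b c
    have e := hm2 b
    have p0 := h2.1 b false; have p1 := h2.1 b true
    simp [Fintype.sum_bool] at e
    rcases c <;> linarith
  constructor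
  · intro Q hQ hM a b c
    have q := hQ.1
    have e1 := hM.1 a b
    have e2 := hM.2 b c
    have eν : ν b = ∑ a : Bool, ∑ c : Bool, Q a b c := by
      rw [← hm1 b]; exact (Finset.sum_congr rfl fun a _ => (hM.1 a b).symm)
    have q1 := q a b false; have q2 := q a b true
    have q3 := q false b c; have q4 := q true b c
    have q5 := q false b false; have q6 := q false b true
    have q7 := q true b false; have q8 := q true b true
    simp [Fintype.sum_bool] at e1 e2 eν
    constructor
    · apply max_le (q a b c)
      rcases a <;> rcases c <;> linarith
    · apply le_min <;> rcases a <;> rcases c <;> linarith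
  · intro a b c
    constructor
    · have htl : ∀ b', 0 ≤ max 0 (μ₁ a b' + μ₂ b' c - ν b') ∧
          μ₁ a b' + μ₂ b' c - ν b' ≤ max 0 (μ₁ a b' + μ₂ b' c - ν b') :=
        fun b' => ⟨le_max_left _ _, le_max_right _ _⟩
      have htu : ∀ b', max 0 (μ₁ a b' + μ₂ b' c - ν b') ≤ μ₁ a b' ∧
          max 0 (μ₁ a b' + μ₂ b' c - ν b') ≤ μ₂ b' c := by
        intro b'
        constructor <;> apply max_le
        · exact h1.1 a b'
        · have := key2 b' c; linarith
        · exact h2.1 b' c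
        · have := key1 a b'; linarith
      obtain ⟨Q, hQ, hM, hv⟩ := construct ν μ₁ μ₂ hν hm1 hm2 a c
        (fun b' => max 0 (μ₁ a b' + μ₂ b' c - ν b')) htl htu
      exact ⟨Q, hQ, hM, hv b⟩
    · have htl : ∀ b', 0 ≤ min (μ₁ a b') (μ₂ b' c) ∧
          μ₁ a b' + μ₂ b' c - ν b' ≤ min (μ₁ a b') (μ₂ b' c) := by
        intro b'
        constructor
        · exact le_min (h1.1 a b') (h2.1 b' c)
        · apply le_min
          · have := key2 b' c; linarith
          · have := key1 a b'; linarith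
      have htu : ∀ b', min (μ₁ a b') (μ₂ b' c) ≤ μ₁ a b' ∧
          min (μ₁ a b') (μ₂ b' c) ≤ μ₂ b' c :=
        fun b' => ⟨min_le_left _ _, min_le_right _ _⟩
      obtain ⟨Q, hQ, hM, hv⟩ := construct ν μ₁ μ₂ hν hm1 hm2 a c
        (fun b' => min (μ₁ a b') (μ₂ b' c)) htl htu
      exact ⟨Q, hQ, hM, hv b⟩

end Frechet
end
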